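/- arXiv:1605.00034 — 2 statements merged into one kernel-verified Lean document; each statement's English description precedes it below -/
import Mathlib

section
/- If a finite set X of points in the plane has minimum interparticle distance d_min, and the bond graph connects pairs at distance in [α, β] with β < √2 · d_min, then the bond graph is planar: for any two distinct bonds {x,y} and {x',y'}, the open line segments (x,y) and (x',y') do not intersect unless the bonds share an endpoint. -/
open scoped Classical

/-- One-dimensional weighted-average identity for crossing segments. -/
lemma quarter_bound (u v u' v' : ℝ) (h : u + v = 1) (h' : u' + v' = 1) :
    u*v + u'*v' ≤ 1/2 := by
  nlinarith [sq_nonneg (u - v), sq_nonneg (u' - v')]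

lemma seg_identity (u v u' v' a b c e : ℝ) (h1 : u + v = 1) (h2 : u' + v' = 1)
    (h3 : u*a + v*b = u'*c + v'*e) :
    u*u'*(a-c)^2 + u*v'*(a-e)^2 + v*u'*(b-c)^2 + v*v'*(b-e)^2
      = u*v*(a-b)^2 + u'*v'*(c-e)^2 := by
  have hv : v = 1 - u := by linarith
  have hv' : v' = 1 - u' := by linarith
  subst hv hv'
  linear_combination (u*a + (1-u)*b - u'*c - (1-u')*e) * h3

set_option maxHeartbeats 1000000 in
/-- If a finite set `X` of points in the plane has minimum interparticle
distance `d`, and the bond graph connects pairs at distance in `[α, β]` with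
`β < √2 · d`, then the bond graph is planar: any two bonds not sharing an endpoint
have disjoint open segments. -/
theorem bond_graph_planar
    (X : Finset (EuclideanSpace ℝ (Fin 2)))
    (α β d : ℝ) (hα : 0 < α) (hα1 : α ≤ 1) (h1β : 1 ≤ β)
    (hdmin : ∀ x ∈ X, ∀ y ∈ X, x ≠ y → d ≤ dist x y)
    (hdatt : ∃ x ∈ X, ∃ y ∈ X, x ≠ y ∧ dist x y = d)
    (hβ : β < Real.sqrt 2 * d)
    (x y x' y' : EuclideanSpace ℝ (Fin 2))
    (hx : x ∈ X) (hy : y ∈ X) (hx' : x' ∈ X) (hy' : y' ∈ X)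
    (hbond : α ≤ dist x y ∧ dist x y ≤ β)
    (hbond' : α ≤ dist x' y' ∧ dist x' y' ≤ β)
    (hshare : ({x, y} : Set (EuclideanSpace ℝ (Fin 2))) ∩ {x', y'} = ∅) :
    openSegment ℝ x y ∩ openSegment ℝ x' y' = ∅ := by
  by_contra hne
  obtain ⟨p, hp1, hp2⟩ := Set.nonempty_iff_ne_empty.2 hne
  obtain ⟨u, v, hu, hv, huv, hp⟩ := hp1
  obtain ⟨u', v', hu', hv', huv', hp'⟩ := hp2
  -- positivity of d
  obtain ⟨x₀, -, y₀, -, hne₀, hd₀⟩ := hdatt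
  have hd0 : 0 < d := hd₀ ▸ dist_pos.2 hne₀
  -- the four endpoints of distinct bonds are pairwise distinct across bonds
  have hmem : ∀ a : EuclideanSpace ℝ (Fin 2),
      a ∉ ({x, y} : Set (EuclideanSpace ℝ (Fin 2))) ∩ {x', y'} := by
    rw [hshare]; exact fun a => id
  have hxx' : x ≠ x' := fun h => hmem x ⟨by simp, by simp [h]⟩
  have hxy' : x ≠ y' := fun h => hmem x ⟨by simp, by simp [h]⟩
  have hyx' : y ≠ x' := fun h => hmem y ⟨by simp, by simp [h]⟩
  have hyy' : y ≠ y' := fun h => hmem y ⟨by simp, by simp [h]⟩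
  -- squared-distance form
  have dsq : ∀ z w : EuclideanSpace ℝ (Fin 2),
      dist z w ^ 2 = (z 0 - w 0)^2 + (z 1 - w 1)^2 := by
    intro z w
    rw [EuclideanSpace.dist_eq, Real.sq_sqrt (by positivity)]
    simp [Fin.sum_univ_two, Real.dist_eq, sq_abs]
  -- lower bounds on cross distances, squared
  have hsq : ∀ z w : EuclideanSpace ℝ (Fin 2), z ∈ X → w ∈ X → z ≠ w →
      d ^ 2 ≤ (z 0 - w 0)^2 + (z 1 - w 1)^2 := by
    intro z w hz hw hzw
    rw [← dsq]
    exact pow_le_pow_left₀ hd0.le (hdmin z hz w hw hzw) 2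
  have D1 := hsq x x' hx hx' hxx'
  have D2 := hsq x y' hx hy' hxy'
  have D3 := hsq y x' hy hx' hyx'
  have D4 := hsq y y' hy hy' hyy'
  -- upper bounds on bond lengths, squared
  have hβ0 : (0:ℝ) < β := lt_of_lt_of_le one_pos h1β
  have P1 : (x 0 - y 0)^2 + (x 1 - y 1)^2 ≤ β ^ 2 := by
    rw [← dsq]; exact pow_le_pow_left₀ dist_nonneg hbond.2 2
  have P2 : (x' 0 - y' 0)^2 + (x' 1 - y' 1)^2 ≤ β ^ 2 := by
    rw [← dsq]; exact pow_le_pow_left₀ dist_nonneg hbond'.2 2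
  -- β² < 2 d²
  have hβ2 : β ^ 2 < 2 * d ^ 2 := by
    have h2 : (Real.sqrt 2 * d) ^ 2 = 2 * d ^ 2 := by
      rw [mul_pow, Real.sq_sqrt (by norm_num)]
    calc β ^ 2 < (Real.sqrt 2 * d) ^ 2 := by
          apply pow_lt_pow_left₀ hβ hβ0.le; norm_num
      _ = 2 * d ^ 2 := h2
  -- coordinates of the common point relation
  have hpc : ∀ i : Fin 2, u * x i + v * y i = u' * x' i + v' * y' i := by
    intro i
    have := congrArg (fun z : EuclideanSpace ℝ (Fin 2) => z i) (hp.trans hp'.symm)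
    simpa using this
  -- key identity per coordinate, summed
  have I0 := seg_identity u v u' v' (x 0) (y 0) (x' 0) (y' 0) huv huv' (hpc 0)
  have I1 := seg_identity u v u' v' (x 1) (y 1) (x' 1) (y' 1) huv huv' (hpc 1)
  -- weighted lower bounds
  have w1 : u*u' * d^2 ≤ u*u' * ((x 0 - x' 0)^2 + (x 1 - x' 1)^2) :=
    mul_le_mul_of_nonneg_left D1 (by positivity)
  have w2 : u*v' * d^2 ≤ u*v' * ((x 0 - y' 0)^2 + (x 1 - y' 1)^2) :=
    mul_le_mul_of_nonneg_left D2 (by positivity)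
  have w3 : v*u' * d^2 ≤ v*u' * ((y 0 - x' 0)^2 + (y 1 - x' 1)^2) :=
    mul_le_mul_of_nonneg_left D3 (by positivity)
  have w4 : v*v' * d^2 ≤ v*v' * ((y 0 - y' 0)^2 + (y 1 - y' 1)^2) :=
    mul_le_mul_of_nonneg_left D4 (by positivity)
  have e1 : u*u' * d^2 + u*v' * d^2 + v*u' * d^2 + v*v' * d^2 = d^2 := by
    linear_combination ((u' + v') * d^2) * huv + d^2 * huv'
  have hsum : d^2 ≤ u*v * ((x 0 - y 0)^2 + (x 1 - y 1)^2)
      + u'*v' * ((x' 0 - y' 0)^2 + (x' 1 - y' 1)^2) := by linarith [w1, w2, w3, w4, e1, I0, I1]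
  -- final contradiction
  have q1 : u*v * ((x 0 - y 0)^2 + (x 1 - y 1)^2) ≤ u*v * β^2 :=
    mul_le_mul_of_nonneg_left P1 (by positivity)
  have q2 : u'*v' * ((x' 0 - y' 0)^2 + (x' 1 - y' 1)^2) ≤ u'*v' * β^2 :=
    mul_le_mul_of_nonneg_left P2 (by positivity)
  have huv4 : u*v + u'*v' ≤ 1/2 := quarter_bound u v u' v' huv huv'
  have : (u*v + u'*v') * β^2 ≤ (1/2) * β^2 :=
    mul_le_mul_of_nonneg_right huv4 (sq_nonneg β)
  linarith [hsum, q1, q2, this, hβ2]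
end

section
/- If four distinct points x, y, x', y' in the plane satisfy pairwise distances ≥ d and the segments [x,y] and [x',y'] cross (intersect at an interior point of both), then max(|x−y|, |x'−y'|) ≥ √2 · d. -/
/-!
Let `p` be the crossing point. By Stewart's theorem, for `p` between `u` and `v` the quantity
`|qp|² + |pu|·|pv|` is a convex combination of `|qu|²` and `|qv|²`, so with `u, v = x', y'` and
`q = x` or `q = y` it is at least `d²`. If, say, `|px| ≤ |py|`, then
`|xy|² + |x'y'|² ≥ 4 |px|·|py| + 4 |px'|·|py'| ≥ 4 (|px|² + |px'|·|py'|) ≥ 4 d²`,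
so the longer of the two segments has length at least `√2 · d`.
-/

open EuclideanGeometry

theorem four_mul_le_add_sq_add_add_sq {c a b a' b' : ℝ} (ha : 0 ≤ a) (hb : 0 ≤ b)
    (hca : c ≤ a ^ 2 + a' * b') (hcb : c ≤ b ^ 2 + a' * b') :
    4 * c ≤ (a + b) ^ 2 + (a' + b') ^ 2 := by
  rcases le_total a b with hab | hba
  · nlinarith [sq_nonneg (a - b), sq_nonneg (a' - b'), mul_le_mul_of_nonneg_left hab ha]
  · nlinarith [sq_nonneg (a - b), sq_nonneg (a' - b'), mul_le_mul_of_nonneg_left hba hb]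

theorem sqrt_two_mul_le_max_of_four_mul_sq_le {d m m' : ℝ} (hm : 0 ≤ m) (hm' : 0 ≤ m')
    (h : 4 * d ^ 2 ≤ m ^ 2 + m' ^ 2) :
    Real.sqrt 2 * d ≤ max m m' := by
  refine (le_abs_self _).trans (abs_le_of_sq_le_sq ?_ (hm.trans (le_max_left _ _)))
  rw [mul_pow, Real.sq_sqrt zero_le_two]
  rcases le_total m m' with hle | hle
  · rw [max_eq_right hle]; nlinarith [pow_le_pow_left₀ hm hle 2]
  · rw [max_eq_left hle]; nlinarith [pow_le_pow_left₀ hm' hle 2]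

section

variable {V P : Type*} [NormedAddCommGroup V] [InnerProductSpace ℝ V] [MetricSpace P]
  [NormedAddTorsor V P]

theorem le_dist_sq_add_dist_mul_dist_of_wbtw {u v p : P} (q : P) {c : ℝ} (hp : Wbtw ℝ u p v)
    (hu : c ≤ dist q u ^ 2) (hv : c ≤ dist q v ^ 2) :
    c ≤ dist q p ^ 2 + dist p u * dist p v := by
  by_cases hpu : p = u
  · simpa [hpu] using hu
  by_cases hpv : p = v
  · simpa [hpv] using hv
  have hsbtw : Sbtw ℝ u p v := ⟨hp, hpu, hpv⟩
  have stewart := dist_sq_mul_dist_add_dist_sq_mul_dist q u v p hsbtw.angle₁₂₃_eq_pi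
  have hsum : dist p u + dist p v = dist u v := by
    rw [dist_comm p u]; exact hp.dist_add_dist
  rw [dist_comm u p, dist_comm v p] at stewart
  refine le_of_mul_le_mul_left ?_ (dist_pos.2 hsbtw.left_ne_right)
  rw [← stewart, ← hsum]
  nlinarith [dist_nonneg (x := p) (y := u), dist_nonneg (x := p) (y := v)]

theorem four_mul_sq_le_dist_sq_add_dist_sq_of_wbtw {x y x' y' p : P} {d : ℝ} (hd : 0 ≤ d)
    (hp : Wbtw ℝ x p y) (hp' : Wbtw ℝ x' p y')
    (hxx' : d ≤ dist x x') (hxy' : d ≤ dist x y') (hyx' : d ≤ dist y x')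
    (hyy' : d ≤ dist y y') :
    4 * d ^ 2 ≤ dist x y ^ 2 + dist x' y' ^ 2 := by
  have sq_le {a : ℝ} (h : d ≤ a) : d ^ 2 ≤ a ^ 2 := pow_le_pow_left₀ hd h 2
  have hx := le_dist_sq_add_dist_mul_dist_of_wbtw x hp' (sq_le hxx') (sq_le hxy')
  have hy := le_dist_sq_add_dist_mul_dist_of_wbtw y hp' (sq_le hyx') (sq_le hyy')
  rw [dist_comm y p] at hy
  rw [← hp.dist_add_dist, ← hp'.dist_add_dist, dist_comm x' p]
  exact four_mul_le_add_sq_add_add_sq dist_nonneg dist_nonneg hx hy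

end

/-- If four distinct points `x, y, x', y'` in the plane have all pairwise
distances `≥ d` and the open segments `(x,y)` and `(x',y')` cross, then
`max(|x−y|, |x'−y'|) ≥ √2 · d`. -/
theorem crossing_bonds_long
    (d : ℝ) (hd : 0 < d)
    (x y x' y' : EuclideanSpace ℝ (Fin 2))
    (hpair : List.Pairwise (fun p q => p ≠ q ∧ d ≤ dist p q) [x, y, x', y'])
    (hcross : (openSegment ℝ x y ∩ openSegment ℝ x' y').Nonempty) :
    Real.sqrt 2 * d ≤ max (dist x y) (dist x' y') := by
  obtain ⟨p, hp, hp'⟩ := hcross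
  simp only [List.pairwise_cons, List.mem_cons, List.not_mem_nil,
    forall_eq_or_imp] at hpair
  obtain ⟨⟨-, ⟨-, hxx'⟩, ⟨-, hxy'⟩, -⟩, ⟨⟨-, hyx'⟩, ⟨-, hyy'⟩, -⟩, -⟩ := hpair
  refine sqrt_two_mul_le_max_of_four_mul_sq_le dist_nonneg dist_nonneg ?_
  exact four_mul_sq_le_dist_sq_add_dist_sq_of_wbtw hd.le
    (mem_segment_iff_wbtw.1 (openSegment_subset_segment ℝ x y hp))
    (mem_segment_iff_wbtw.1 (openSegment_subset_segment ℝ x' y' hp')) hxx' hxy' hyx' hyy'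
end
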